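/- Let P₀ be an orthogonal projector of rank m on ℂ^N, ψ(t) := exp(2πi t P₀) for t ∈ [0,1], and W: 𝕋 → U(N) smooth and periodic with W(0) = 1. Set φ(t,k) := W(k)ψ(t)W(k)⁻¹. Then (1/4π)∫_{S¹×𝕋}(W × ψ)*β = i ∮_𝕋 Tr{P₀ W(k)⁻¹ ∂_k W(k)} dk (mod 2πℤ), where (g×h)*β = -Tr{h(g⁻¹dg)h⁻¹(g⁻¹dg) + g⁻¹dg(h⁻¹dh + dh h⁻¹)}. -/

import Mathlib

open Matrix Complex

lemma exp_smul_idem {n : ℕ} (P : Matrix (Fin n) (Fin n) ℂ) (hP : P * P = P) (c : ℂ) :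
    NormedSpace.exp (c • P) = 1 + (Complex.exp c - 1) • P := by
  have hpow : ∀ k : ℕ, P ^ (k + 1) = P := by
    intro k
    induction k with
    | zero => simp
    | succ k ih => rw [pow_succ, ih, hP]
  rw [NormedSpace.exp_eq_tsum ℂ]
  show (∑' k : ℕ, ((Nat.factorial k : ℂ))⁻¹ • (c • P) ^ k) = _
  have hfun : (fun k : ℕ => ((Nat.factorial k : ℂ))⁻¹ • (c • P) ^ k)
      = fun k : ℕ => (((Nat.factorial k : ℂ))⁻¹ * c ^ k) • P
          + (if k = 0 then (1 : Matrix (Fin n) (Fin n) ℂ) - P else 0) := by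
    funext k
    cases k with
    | zero => simp
    | succ k => simp [smul_pow, hpow, smul_smul]
  rw [hfun]
  have hs1 : Summable fun k : ℕ => ((Nat.factorial k : ℂ))⁻¹ * c ^ k := by
    simpa [smul_eq_mul] using NormedSpace.expSeries_summable' (𝕂 := ℂ) (𝔸 := ℂ) c
  have hs2 : Summable fun k : ℕ => (((Nat.factorial k : ℂ))⁻¹ * c ^ k) • P := hs1.smul_const P
  have hs3 : Summable fun k : ℕ =>
      (if k = 0 then (1 : Matrix (Fin n) (Fin n) ℂ) - P else 0) := by
    apply summable_of_ne_finset_zero (s := {0})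
    intro b hb
    simp only [Finset.mem_singleton] at hb
    simp [hb]
  rw [Summable.tsum_add hs2 hs3, Summable.tsum_smul_const hs1]
  have h4 : ∑' k : ℕ, ((Nat.factorial k : ℂ))⁻¹ * c ^ k = Complex.exp c := by
    rw [Complex.exp_eq_exp_ℂ, NormedSpace.exp_eq_tsum ℂ]
    simp [smul_eq_mul]
  have h5 : ∑' k : ℕ, (if k = 0 then (1 : Matrix (Fin n) (Fin n) ℂ) - P else 0)
      = 1 - P := by
    rw [tsum_eq_sum (s := {0}) (by intro b hb; simp only [Finset.mem_singleton] at hb; simp [hb])]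
    simp
  rw [h4, h5, sub_smul, one_smul]
  abel

lemma one_add_smul_mul {n : ℕ} (P : Matrix (Fin n) (Fin n) ℂ) (hP : P * P = P)
    (a b : ℂ) (hab : a * b = 1) :
    (1 + (a - 1) • P) * (1 + (b - 1) • P) = 1 := by
  have h : ((a - 1) • P) * ((b - 1) • P) = ((a - 1) * (b - 1)) • P := by
    rw [Matrix.smul_mul, Matrix.mul_smul, hP, smul_smul]
  rw [mul_add, add_mul, add_mul, mul_one, one_mul, mul_one, h]
  have hc : (a - 1) + ((b - 1) + (a - 1) * (b - 1)) = 0 := by linear_combination hab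
  calc 1 + (a - 1) • P + ((b - 1) • P + ((a - 1) * (b - 1)) • P)
      = 1 + ((a - 1) + ((b - 1) + (a - 1) * (b - 1))) • P := by
        rw [add_smul, add_smul]; abel
    _ = 1 := by rw [hc, zero_smul, add_zero]

/-- Let `P₀` be a rank-`m` orthogonal projector on `ℂ^N`,
`ψ(t) := exp(2πi t P₀)`, and `W : 𝕋 → U(N)` smooth and periodic with `W(0) = 1`;
set `φ(t,k) := W(k) ψ(t) W(k)⁻¹`. Then
`(1/4π)∫_{S¹×𝕋}(W × ψ)*β = i ∮_𝕋 Tr{P₀ W(k)⁻¹ ∂ₖW(k)} dk (mod 2πℤ)`, where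
`(g×h)*β = -Tr{h(g⁻¹dg)h⁻¹(g⁻¹dg) + g⁻¹dg(h⁻¹dh + dh h⁻¹)}`. -/
theorem beta_term_eq_berry_phase_integral
    (N m : ℕ) (P₀ : Matrix (Fin N) (Fin N) ℂ)
    (hproj : P₀ * P₀ = P₀) (hherm : P₀ᴴ = P₀) (hrank : P₀.rank = m)
    (ψ : ℝ → Matrix (Fin N) (Fin N) ℂ)
    (hψ : ∀ t, ψ t = NormedSpace.exp ((2 * Real.pi * I * t) • P₀))
    (W : ℝ → Matrix (Fin N) (Fin N) ℂ)
    (hWsmooth : ∀ a b, ContDiff ℝ (⊤ : ℕ∞) fun k => W k a b)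
    (hWper : ∀ k, W (k + 2 * Real.pi) = W k)
    (hW0 : W 0 = 1)
    (hWunit : ∀ k, W k ∈ Matrix.unitaryGroup (Fin N) ℂ)
    (φ : ℝ → ℝ → Matrix (Fin N) (Fin N) ℂ)
    (hφ : ∀ t k, φ t k = W k * ψ t * (W k)⁻¹)
    -- components in the coordinates (t, k) of g⁻¹dg (A), h⁻¹dh (B), dh h⁻¹ (C),
    -- for g(t,k) = W(k) and h(t,k) = ψ(t):
    (A B C : ℝ → ℝ → Fin 2 → Matrix (Fin N) (Fin N) ℂ)
    (hA : ∀ t k, A t k 0 = (W k)⁻¹ * Matrix.of (fun a b => deriv (fun _ : ℝ => W k a b) t) ∧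
                 A t k 1 = (W k)⁻¹ * Matrix.of (fun a b => deriv (fun s => W s a b) k))
    (hB : ∀ t k, B t k 0 = (ψ t)⁻¹ * Matrix.of (fun a b => deriv (fun s => ψ s a b) t) ∧
                 B t k 1 = (ψ t)⁻¹ * Matrix.of (fun a b => deriv (fun _ : ℝ => ψ t a b) k))
    (hC : ∀ t k, C t k 0 = Matrix.of (fun a b => deriv (fun s => ψ s a b) t) * (ψ t)⁻¹ ∧
                 C t k 1 = Matrix.of (fun a b => deriv (fun _ : ℝ => ψ t a b) k) * (ψ t)⁻¹)
    -- the dt∧dk coefficient of the 2-form (W × ψ)*β: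
    (F : ℝ → ℝ → ℂ)
    (hF : ∀ t k, F t k = -Matrix.trace
      (ψ t * A t k 0 * (ψ t)⁻¹ * A t k 1
        - ψ t * A t k 1 * (ψ t)⁻¹ * A t k 0
        + A t k 0 * (B t k 1 + C t k 1)
        - A t k 1 * (B t k 0 + C t k 0))) :
    ∃ n : ℤ,
      (1 / (4 * (Real.pi : ℂ))) *
          (∫ t in (0:ℝ)..1, ∫ k in (0:ℝ)..(2 * Real.pi), F t k)
        = I * (∫ k in (0:ℝ)..(2 * Real.pi),
            Matrix.trace (P₀ * ((W k)⁻¹ * Matrix.of (fun a b => deriv (fun s => W s a b) k))))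
          + 2 * (Real.pi : ℂ) * (n : ℂ) := by
  have hπ : (Real.pi : ℂ) ≠ 0 := by exact_mod_cast Real.pi_ne_zero
  set e : ℝ → ℂ := fun t => Complex.exp (2 * Real.pi * I * t) with he
  have hψc : ∀ t, ψ t = 1 + (e t - 1) • P₀ := fun t => by
    rw [hψ t, exp_smul_idem P₀ hproj]
  have hee : ∀ t : ℝ, e t * Complex.exp (-(2 * Real.pi * I * t)) = 1 := fun t => by
    rw [he]
    rw [← Complex.exp_add]
    simp
  have hinv : ∀ t, (ψ t)⁻¹ = 1 + (Complex.exp (-(2 * Real.pi * I * t)) - 1) • P₀ := by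
    intro t
    apply Matrix.inv_eq_right_inv
    rw [hψc t]
    exact one_add_smul_mul P₀ hproj _ _ (hee t)
  -- derivative of e
  have hder : ∀ t : ℝ, HasDerivAt (fun s : ℝ => e s) (2 * Real.pi * I * e t) t := by
    intro t
    have h0 : HasDerivAt (fun s : ℝ => 2 * (Real.pi : ℂ) * I * (s : ℂ))
        (2 * (Real.pi : ℂ) * I) t := by
      simpa using (Complex.ofRealCLM.hasDerivAt (x := t)).const_mul (2 * (Real.pi : ℂ) * I)
    have h1 := h0.cexp
    have h2 : (2 : ℂ) * Real.pi * I * e t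
        = Complex.exp (2 * Real.pi * I * t) * (2 * Real.pi * I) := by
      simp only [he]; ring
    rw [h2]
    exact h1
  -- entrywise derivative of ψ
  have hψder : ∀ (t : ℝ) (a b : Fin N), deriv (fun s => ψ s a b) t
      = 2 * Real.pi * I * e t * P₀ a b := by
    intro t a b
    have h2 : (fun s : ℝ => ψ s a b)
        = fun s : ℝ => (e s - 1) * P₀ a b + (1 : Matrix (Fin N) (Fin N) ℂ) a b := by
      funext s
      rw [hψc s, Matrix.add_apply, Matrix.smul_apply, smul_eq_mul]
      ring
    rw [h2]
    exact ((((hder t).sub_const 1).mul_const (P₀ a b)).add_const _).deriv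
  have hofder : ∀ t : ℝ, Matrix.of (fun a b => deriv (fun s => ψ s a b) t)
      = (2 * Real.pi * I * e t) • P₀ := by
    intro t; ext a b
    simp [hψder, Matrix.smul_apply, smul_eq_mul]
  have hcoef : ∀ t : ℝ, 2 * (Real.pi : ℂ) * I * e t * Complex.exp (-(2 * Real.pi * I * t))
      = 2 * Real.pi * I := by
    intro t
    rw [mul_assoc, hee t, mul_one]
  have key : ∀ x : ℂ, P₀ + (x - 1) • P₀ = x • P₀ := by
    intro x; rw [sub_smul, one_smul]; abel
  have hB0 : ∀ t k : ℝ, B t k 0 = (2 * Real.pi * I) • P₀ := by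
    intro t k
    rw [(hB t k).1, hofder, hinv, Matrix.mul_smul, add_mul, one_mul, Matrix.smul_mul, hproj,
      key, smul_smul, hcoef]
  have hC0 : ∀ t k : ℝ, C t k 0 = (2 * Real.pi * I) • P₀ := by
    intro t k
    rw [(hC t k).1, hofder, hinv, Matrix.smul_mul, mul_add, mul_one, Matrix.mul_smul, hproj,
      key, smul_smul, hcoef]
  have hA0 : ∀ t k : ℝ, A t k 0 = 0 := by
    intro t k
    rw [(hA t k).1]
    have h3 : Matrix.of (fun a b => deriv (fun _ : ℝ => W k a b) t)
        = (0 : Matrix (Fin N) (Fin N) ℂ) := by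
      ext a b; simp
    rw [h3, mul_zero]
  have hFeq : ∀ t k : ℝ, F t k = 4 * Real.pi * I *
      Matrix.trace (P₀ * ((W k)⁻¹ * Matrix.of (fun a b => deriv (fun s => W s a b) k))) := by
    intro t k
    rw [hF t k, hA0, hB0 t k, hC0 t k, (hA t k).2]
    simp only [mul_zero, zero_mul, sub_zero, zero_add, zero_sub, add_zero, sub_self,
      Matrix.trace_neg, neg_neg]
    rw [mul_add, mul_smul_comm, Matrix.trace_add, Matrix.trace_smul,
      Matrix.trace_mul_comm, smul_eq_mul]
    ring
  refine ⟨0, ?_⟩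
  have hiint : (∫ t in (0:ℝ)..1, ∫ k in (0:ℝ)..(2 * Real.pi), F t k)
      = 4 * Real.pi * I * ∫ k in (0:ℝ)..(2 * Real.pi),
          Matrix.trace (P₀ * ((W k)⁻¹ * Matrix.of (fun a b => deriv (fun s => W s a b) k))) := by
    simp_rw [hFeq, intervalIntegral.integral_const_mul, intervalIntegral.integral_const]
    simp
  rw [hiint, Int.cast_zero, mul_zero, add_zero]
  field_simp
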